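/- arXiv:2301.02712 — 4 statements merged into one kernel-verified Lean document; each statement's English description precedes it below -/
import Mathlib

section
/- Let m ≥ 2 be an integer, 0 < ε < 1 and C > 0. Then there exists δ ∈ (0, 1/2) such that for every integer k ≥ 0 and all z̃, w̃ ∈ ℂ with z̃^{m^k} = ε and w̃^{m^k} = ε, one has max(ρ(1−δ, z̃), ρ(δ, w̃)) ≥ C. (Consequently, for F(z,w) = (z^m, w^m) the point (1−δ, δ) of the unit bidisc has Kobayashi distance at least C from every point of ∪_{k≥0} F^{−k}(ε, ε).) -/
open Filter Topology

/-- The Poincaré (= Kobayashi) distance on the unit disc: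
`ρ(z, w) = log((1 + t)/(1 − t))` with `t = |z − w| / |1 − z·conj w|`. -/
noncomputable def poincareDist (z w : ℂ) : ℝ :=
  Real.log ((1 + ‖z - w‖ / ‖1 - z * (starRingEnd ℂ) w‖) /
            (1 - ‖z - w‖ / ‖1 - z * (starRingEnd ℂ) w‖))

/-!
The pseudo-hyperbolic distance `t(a, z) = |a - z| / |1 - a z̄|` satisfies
`1 - t² = (1 - |a|²)(1 - |z|²) / |1 - a z̄|²`, and `|1 - a z̄| ≥ 1 - |a| |z|`; hence replacing
`a, z` by `|a|, |z|` can only decrease the Poincaré distance. On `(-1, 1)` the Poincaré distance is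
`|2 artanh x - 2 artanh y|`. All backward images of `ε` have one common modulus `r`, so by the
triangle inequality on the real axis `ρ(1 - δ, r) + ρ(δ, r) ≥ 2 (artanh (1 - δ) - artanh δ)`,
which exceeds `2 C` once `δ` is small.
-/

open ComplexConjugate Real Complex

noncomputable def pseudoHypDist (z w : ℂ) : ℝ :=
  ‖z - w‖ / ‖1 - z * conj w‖

lemma pseudoHypDist_nonneg (z w : ℂ) : 0 ≤ pseudoHypDist z w := by
  unfold pseudoHypDist; positivity

lemma poincareDist_eq_log (z w : ℂ) :
    poincareDist z w = Real.log ((1 + pseudoHypDist z w) / (1 - pseudoHypDist z w)) := rfl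

lemma pseudoHypDist_comm (z w : ℂ) : pseudoHypDist z w = pseudoHypDist w z := by
  rw [pseudoHypDist, pseudoHypDist, norm_sub_rev z w, ← norm_conj (1 - z * conj w)]
  simp [mul_comm]

lemma norm_one_sub_mul_conj_sq_sub_norm_sub_sq (z w : ℂ) :
    ‖1 - z * conj w‖ ^ 2 - ‖z - w‖ ^ 2 = (1 - ‖z‖ ^ 2) * (1 - ‖w‖ ^ 2) := by
  simp only [Complex.sq_norm, normSq_apply, sub_re, sub_im, mul_re, mul_im, conj_re, conj_im,
    one_re, one_im]
  ring

lemma one_sub_norm_mul_norm_le (z w : ℂ) : 1 - ‖z‖ * ‖w‖ ≤ ‖1 - z * conj w‖ := by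
  simpa using norm_sub_norm_le (1 : ℂ) (z * conj w)

lemma norm_one_sub_ofReal_mul_conj (x y : ℝ) : ‖1 - (x : ℂ) * conj (y : ℂ)‖ = |1 - x * y| := by
  rw [conj_ofReal, ← ofReal_mul, ← ofReal_one, ← ofReal_sub, norm_real, Real.norm_eq_abs]

section UnitDisc

variable {z w : ℂ} (hz : ‖z‖ < 1) (hw : ‖w‖ < 1)
include hz hw

lemma norm_one_sub_mul_conj_pos : 0 < ‖1 - z * conj w‖ := by
  have := one_sub_norm_mul_norm_le z w
  nlinarith [norm_nonneg z, norm_nonneg w]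

lemma one_sub_pseudoHypDist_sq :
    1 - pseudoHypDist z w ^ 2 = (1 - ‖z‖ ^ 2) * (1 - ‖w‖ ^ 2) / ‖1 - z * conj w‖ ^ 2 := by
  have := (norm_one_sub_mul_conj_pos hz hw).ne'
  rw [pseudoHypDist, ← norm_one_sub_mul_conj_sq_sub_norm_sub_sq]
  field_simp

lemma pseudoHypDist_lt_one : pseudoHypDist z w < 1 := by
  have h := one_sub_pseudoHypDist_sq hz hw
  have : 0 < (1 - ‖z‖ ^ 2) * (1 - ‖w‖ ^ 2) / ‖1 - z * conj w‖ ^ 2 := by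
    have := norm_one_sub_mul_conj_pos hz hw
    apply div_pos (mul_pos ?_ ?_) (by positivity) <;> nlinarith [norm_nonneg z, norm_nonneg w]
  nlinarith [pseudoHypDist_nonneg z w]

lemma pseudoHypDist_norm_le : pseudoHypDist ‖z‖ ‖w‖ ≤ pseudoHypDist z w := by
  have hz' : ‖(‖z‖ : ℂ)‖ < 1 := by simpa using hz
  have hw' : ‖(‖w‖ : ℂ)‖ < 1 := by simpa using hw
  have hden : ‖1 - (‖z‖ : ℂ) * conj (‖w‖ : ℂ)‖ ≤ ‖1 - z * conj w‖ := by
    rw [norm_one_sub_ofReal_mul_conj, abs_of_nonneg (by nlinarith [norm_nonneg z, norm_nonneg w])]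
    exact one_sub_norm_mul_norm_le z w
  have hsq : 1 - pseudoHypDist z w ^ 2 ≤ 1 - pseudoHypDist ‖z‖ ‖w‖ ^ 2 := by
    rw [one_sub_pseudoHypDist_sq hz hw, one_sub_pseudoHypDist_sq hz' hw', norm_real, norm_real,
      norm_norm, norm_norm]
    apply div_le_div_of_nonneg_left _ (by have := norm_one_sub_mul_conj_pos hz' hw'; positivity)
    · gcongr
    · apply mul_nonneg <;> nlinarith [norm_nonneg z, norm_nonneg w]
  exact (pow_le_pow_iff_left₀ (pseudoHypDist_nonneg _ _) (pseudoHypDist_nonneg _ _)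
    two_ne_zero).mp (by linarith)

lemma poincareDist_eq_two_mul_artanh : poincareDist z w = 2 * artanh (pseudoHypDist z w) := by
  rw [poincareDist_eq_log, artanh_eq_half_log
    ⟨by linarith [pseudoHypDist_nonneg z w], (pseudoHypDist_lt_one hz hw).le⟩]
  ring

lemma poincareDist_norm_le : poincareDist ‖z‖ ‖w‖ ≤ poincareDist z w := by
  have hz' : ‖(‖z‖ : ℂ)‖ < 1 := by simpa using hz
  have hw' : ‖(‖w‖ : ℂ)‖ < 1 := by simpa using hw
  rw [poincareDist_eq_two_mul_artanh hz hw, poincareDist_eq_two_mul_artanh hz' hw']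
  gcongr 2 * ?_
  exact artanh_le_artanh (by linarith [pseudoHypDist_nonneg ‖z‖ ‖w‖])
    (pseudoHypDist_lt_one hz hw) (pseudoHypDist_norm_le hz hw)

end UnitDisc

lemma two_mul_artanh_sub_artanh {x y : ℝ} (hx : |x| < 1) (hy : |y| < 1) :
    2 * (artanh x - artanh y) = Real.log ((1 + x) / (1 - x) / ((1 + y) / (1 - y))) := by
  rw [abs_lt] at hx hy
  rw [artanh_eq_half_log ⟨by linarith, by linarith⟩, artanh_eq_half_log ⟨by linarith, by linarith⟩,
    Real.log_div (div_pos (by linarith) (by linarith)).ne' (div_pos (by linarith) (by linarith)).ne']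
  ring

lemma poincareDist_ofReal {x y : ℝ} (hx : |x| < 1) (hy : |y| < 1) :
    poincareDist x y = 2 * |artanh x - artanh y| := by
  wlog hxy : y ≤ x generalizing x y
  · rw [poincareDist_eq_log, pseudoHypDist_comm, ← poincareDist_eq_log, abs_sub_comm]
    exact this hy hx (by linarith)
  have hmul : x * y < 1 := by
    rw [abs_lt] at hx hy
    nlinarith
  have hdist : pseudoHypDist x y = (x - y) / (1 - x * y) := by
    rw [pseudoHypDist, norm_one_sub_ofReal_mul_conj, ← ofReal_sub, norm_real, Real.norm_eq_abs,
      abs_of_nonneg (by linarith), abs_of_pos (by linarith)]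
  rw [abs_of_nonneg (sub_nonneg.mpr (artanh_le_artanh (by linarith [abs_lt.mp hy])
      (by linarith [abs_lt.mp hx]) hxy)),
    two_mul_artanh_sub_artanh hx hy, poincareDist_eq_log, hdist]
  rw [abs_lt] at hx hy
  have h1 : 1 - x * y - (x - y) ≠ 0 := by nlinarith
  have h2 : 1 - x ≠ 0 := by linarith
  have h3 : 1 + y ≠ 0 := by linarith
  have h4 : 1 - x * y ≠ 0 := by linarith
  congr 1
  rw [one_add_div h4, one_sub_div h4, div_div_div_cancel_right₀ h4]
  field_simp
  ring

lemma two_mul_abs_artanh_sub_le_poincareDist {a : ℝ} (ha0 : 0 ≤ a) (ha1 : a < 1) {z : ℂ}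
    (hz : ‖z‖ < 1) : 2 * |artanh a - artanh ‖z‖| ≤ poincareDist a z := by
  have ha : ‖(a : ℂ)‖ = a := by rw [norm_real, Real.norm_of_nonneg ha0]
  calc 2 * |artanh a - artanh ‖z‖|
      = poincareDist ‖(a : ℂ)‖ ‖z‖ := by
        rw [ha, poincareDist_ofReal (abs_lt.mpr ⟨by linarith, ha1⟩)
          (abs_lt.mpr ⟨by linarith [norm_nonneg z], hz⟩)]
    _ ≤ poincareDist a z := poincareDist_norm_le (ha.symm ▸ ha1) hz

lemma exists_le_artanh_one_sub_sub_artanh (C : ℝ) :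
    ∃ δ : ℝ, 0 < δ ∧ δ < 1 / 2 ∧ C ≤ artanh (1 - δ) - artanh δ := by
  set δ := min (1 / 4) (Real.exp (-(2 * C)))
  have hδ0 : 0 < δ := by positivity
  have hδ14 : δ ≤ 1 / 4 := min_le_left _ _
  have hδexp : Real.exp (2 * C) * δ ≤ 1 := by
    calc Real.exp (2 * C) * δ ≤ Real.exp (2 * C) * Real.exp (-(2 * C)) := by
          gcongr; exact min_le_right _ _
      _ = 1 := by rw [← Real.exp_add, add_neg_cancel, Real.exp_zero]
  have hδ1 : 1 - δ ≠ 0 := by linarith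
  have hδ2 : 0 < (2 - δ) * (1 - δ) := by nlinarith
  refine ⟨δ, hδ0, by linarith, ?_⟩
  suffices 2 * C ≤ 2 * (artanh (1 - δ) - artanh δ) by linarith
  rw [two_mul_artanh_sub_artanh (abs_lt.mpr ⟨by linarith, by linarith⟩)
    (abs_lt.mpr ⟨by linarith, by linarith⟩),
    show (1 + (1 - δ)) / (1 - (1 - δ)) / ((1 + δ) / (1 - δ)) = (2 - δ) * (1 - δ) / (δ * (1 + δ)) by
      field_simp [hδ0.ne']; ring,
    Real.le_log_iff_exp_le (by positivity), le_div_iff₀ (by positivity)]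
  -- `(2 - δ) * (1 - δ) ≥ 1 + δ` as soon as `δ ≤ 1 / 4`
  nlinarith [mul_le_mul_of_nonneg_right hδexp (by linarith : (0 : ℝ) ≤ 1 + δ)]

lemma norm_lt_one_of_pow_eq {𝕜 : Type*} [NormedDivisionRing 𝕜] {z c : 𝕜} {n : ℕ}
    (h : z ^ n = c) (hc : ‖c‖ < 1) : ‖z‖ < 1 :=
  lt_of_pow_lt_pow_left₀ n zero_le_one (by rwa [← norm_pow, h, one_pow])

theorem stmt0_general (m : ℕ) (ε : ℝ) (hε0 : 0 < ε) (hε1 : ε < 1)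
    (C : ℝ) :
    ∃ δ : ℝ, 0 < δ ∧ δ < 1 / 2 ∧
      ∀ (k : ℕ) (z w : ℂ), z ^ (m ^ k) = (ε : ℂ) → w ^ (m ^ k) = (ε : ℂ) →
        C ≤ max (poincareDist ((1 : ℂ) - (δ : ℂ)) z) (poincareDist (δ : ℂ) w) := by
  obtain ⟨δ, hδ0, hδ, hC⟩ := exists_le_artanh_one_sub_sub_artanh C
  refine ⟨δ, hδ0, hδ, fun k z w hz hw => ?_⟩
  have hn : m ^ k ≠ 0 := by
    rintro hn
    rw [hn, pow_zero, ← ofReal_one, ofReal_inj] at hz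
    linarith
  have hz1 : ‖z‖ < 1 :=
    norm_lt_one_of_pow_eq hz (by rwa [norm_real, Real.norm_of_nonneg hε0.le])
  have hzw : ‖w‖ = ‖z‖ := by
    rw [← pow_left_inj₀ (norm_nonneg w) (norm_nonneg z) hn, ← norm_pow, ← norm_pow, hz, hw]
  have hfar := two_mul_abs_artanh_sub_le_poincareDist (a := 1 - δ) (by linarith) (by linarith) hz1
  have hnear := two_mul_abs_artanh_sub_le_poincareDist hδ0.le (by linarith) (hzw ▸ hz1)
  rw [ofReal_sub, ofReal_one] at hfar
  rw [hzw] at hnear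
  have htri := abs_sub_le (artanh (1 - δ)) (artanh ‖z‖) (artanh δ)
  rw [abs_sub_comm (artanh ‖z‖)] at htri
  linarith [le_abs_self (artanh (1 - δ) - artanh δ), le_max_left (poincareDist (1 - δ) z)
    (poincareDist δ w), le_max_right (poincareDist (1 - δ) z) (poincareDist δ w)]

/-- For `F(z,w) = (z^m, w^m)` and an arbitrary constant `C > 0`, there is a point
`(1−δ, δ)` of the unit bidisc whose Kobayashi distance to every point of
`∪_{k≥0} F^{−k}(ε, ε)` is at least `C`. -/
theorem stmt0 (m : ℕ) (hm : 2 ≤ m) (ε : ℝ) (hε0 : 0 < ε) (hε1 : ε < 1)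
    (C : ℝ) (hC : 0 < C) :
    ∃ δ : ℝ, 0 < δ ∧ δ < 1 / 2 ∧
      ∀ (k : ℕ) (z w : ℂ), z ^ (m ^ k) = (ε : ℂ) → w ^ (m ^ k) = (ε : ℂ) →
        C ≤ max (poincareDist ((1 : ℂ) - (δ : ℂ)) z) (poincareDist (δ : ℂ) w) :=
  stmt0_general m ε hε0 hε1 C
end

section
/- Let a ∈ ℂ with |a| < 3/16. Then there exists a sequence (f_n)_{n≥0} of holomorphic functions on the open unit disc Δ such that: f_0 ≡ 2/3; for every n and every z ∈ Δ, f_{n+1}(z)² = f_n(z²) − a·z and f_{n+1}(0) > 0; for every n and z ∈ Δ, |f_n(z)| ≥ 2/3 (in particular f_n(z²) − a·z never vanishes on Δ, so the holomorphic square roots exist); and f_n(0) = (2/3)^{1/2^n}, so f_n(0) → 1 as n → ∞. -/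
/-!
The graphs are pulled back by taking principal square roots, `f (n+1) z = (f n (z²) - a z) ^ (1/2)`.
The invariant is `‖f n - 1‖ ≤ 1/3` on the disc: then `f n (z²) - a z` stays in the closed disc of
radius `1/3 + 3/16 = 25/48` about `1`, which lies in the right half-plane (so the square root is
holomorphic there) and which the principal square root maps back into the disc of radius `1/3`.
-/

open Filter Topology Metric

namespace Complex

lemma re_cpow_inv_two_nonneg (w : ℂ) : 0 ≤ (w ^ (2⁻¹ : ℂ)).re := by
  rw [cpow_inv_two_re]
  exact Real.sqrt_nonneg _

lemma re_le_re_cpow_inv_two_sq (w : ℂ) : w.re ≤ (w ^ (2⁻¹ : ℂ)).re ^ 2 := by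
  rw [cpow_inv_two_re, Real.sq_sqrt (by linarith [neg_abs_le w.re, abs_re_le_norm w])]
  linarith [re_le_norm w]

lemma norm_cpow_inv_two_sub_one_mul_le (w : ℂ) :
    ‖w ^ (2⁻¹ : ℂ) - 1‖ * (1 + (w ^ (2⁻¹ : ℂ)).re) ≤ ‖w - 1‖ := by
  set s := w ^ (2⁻¹ : ℂ)
  have hs : s ^ 2 = w := cpow_ofNat_inv_pow w 2
  calc ‖s - 1‖ * (1 + s.re) ≤ ‖s - 1‖ * ‖s + 1‖ := by
        gcongr
        simpa [add_comm] using re_le_norm (s + 1)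
    _ = ‖w - 1‖ := by rw [← norm_mul, ← hs]; ring_nf

lemma norm_cpow_inv_two_sub_one_le {w : ℂ} (hw : ‖w - 1‖ ≤ 25 / 48) :
    ‖w ^ (2⁻¹ : ℂ) - 1‖ ≤ 1 / 3 := by
  have hw_re : 23 / 48 ≤ w.re := by
    have := (abs_le.mp ((abs_re_le_norm (w - 1)).trans hw)).1
    simp only [sub_re, one_re] at this
    linarith
  have hs_re : 9 / 16 ≤ (w ^ (2⁻¹ : ℂ)).re := by
    nlinarith [re_le_re_cpow_inv_two_sq w, re_cpow_inv_two_nonneg w]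
  nlinarith [norm_cpow_inv_two_sub_one_mul_le w, norm_nonneg (w ^ (2⁻¹ : ℂ) - 1)]

end Complex

lemma tendsto_rpow_one_div_two_pow_nhds_one {x : ℝ} (hx : 0 < x) :
    Tendsto (fun n : ℕ => x ^ ((1 : ℝ) / 2 ^ n)) atTop (𝓝 1) := by
  have h : Tendsto (fun n : ℕ => (1 : ℝ) / 2 ^ n) atTop (𝓝 0) := by
    simpa only [one_div_pow] using
      tendsto_pow_atTop_nhds_zero_of_lt_one (by norm_num : (0 : ℝ) ≤ 1 / 2) (by norm_num)
  simpa [Function.comp_def] using (Real.continuousAt_const_rpow hx.ne').tendsto.comp h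

lemma sq_mem_ball_zero_one {z : ℂ} (hz : z ∈ ball (0 : ℂ) 1) : z ^ 2 ∈ ball (0 : ℂ) 1 := by
  rw [mem_ball_zero_iff, norm_pow] at *
  nlinarith [norm_nonneg z]

lemma norm_sub_mul_sub_one_le {a w z : ℂ} (ha : ‖a‖ ≤ 3 / 16) (hw : ‖w - 1‖ ≤ 1 / 3)
    (hz : z ∈ ball (0 : ℂ) 1) : ‖w - a * z - 1‖ ≤ 25 / 48 := by
  have haz : ‖a * z‖ ≤ 3 / 16 := by
    rw [norm_mul]
    nlinarith [norm_nonneg a, mem_ball_zero_iff.mp hz]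
  calc ‖w - a * z - 1‖ = ‖(w - 1) - a * z‖ := by ring_nf
    _ ≤ ‖w - 1‖ + ‖a * z‖ := norm_sub_le _ _
    _ ≤ 25 / 48 := by linarith

/-- The `n`-th preimage of the graph `w = 2/3` under `(z, w) ↦ (z², w² + a z)`. -/
noncomputable def graphPreimage (a : ℂ) : ℕ → ℂ → ℂ
  | 0 => fun _ => 2 / 3
  | n + 1 => fun z => (graphPreimage a n (z ^ 2) - a * z) ^ (2⁻¹ : ℂ)

namespace graphPreimage

variable {a : ℂ}

lemma succ_sq (a : ℂ) (n : ℕ) (z : ℂ) :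
    graphPreimage a (n + 1) z ^ 2 = graphPreimage a n (z ^ 2) - a * z :=
  Complex.cpow_ofNat_inv_pow _ 2

lemma apply_zero (a : ℂ) (n : ℕ) :
    graphPreimage a n 0 = ((((2 : ℝ) / 3) ^ ((1 : ℝ) / 2 ^ n) : ℝ) : ℂ) := by
  induction n with
  | zero => norm_num [graphPreimage]
  | succ n ih =>
    simp only [graphPreimage]
    rw [zero_pow two_ne_zero, mul_zero, sub_zero, ih, ← Complex.ofReal_ofNat,
      ← Complex.ofReal_inv, ← Complex.ofReal_cpow (by positivity), ← Real.rpow_mul (by norm_num),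
      pow_succ]
    ring_nf

lemma norm_sub_one_le (ha : ‖a‖ ≤ 3 / 16) (n : ℕ) {z : ℂ} (hz : z ∈ ball (0 : ℂ) 1) :
    ‖graphPreimage a n z - 1‖ ≤ 1 / 3 := by
  induction n generalizing z with
  | zero => norm_num [graphPreimage]
  | succ n ih =>
    exact Complex.norm_cpow_inv_two_sub_one_le
      (norm_sub_mul_sub_one_le ha (ih (sq_mem_ball_zero_one hz)) hz)

lemma two_thirds_le_norm (ha : ‖a‖ ≤ 3 / 16) (n : ℕ) {z : ℂ} (hz : z ∈ ball (0 : ℂ) 1) :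
    2 / 3 ≤ ‖graphPreimage a n z‖ := by
  have := norm_sub_norm_le (1 : ℂ) (1 - graphPreimage a n z)
  rw [sub_sub_cancel, norm_one, ← norm_neg, neg_sub] at this
  linarith [norm_sub_one_le ha n hz]

lemma differentiableOn (ha : ‖a‖ ≤ 3 / 16) (n : ℕ) :
    DifferentiableOn ℂ (graphPreimage a n) (ball (0 : ℂ) 1) := by
  induction n with
  | zero => exact differentiableOn_const _
  | succ n ih =>
    refine DifferentiableOn.cpow_const
      ((ih.comp (differentiable_pow 2).differentiableOn fun _ => sq_mem_ball_zero_one).sub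
        (differentiableOn_id.const_mul a)) fun z hz => ?_
    have h := norm_sub_mul_sub_one_le ha (norm_sub_one_le ha n (sq_mem_ball_zero_one hz)) hz
    simpa using Complex.mem_slitPlane_of_norm_lt_one (h.trans_lt (by norm_num))

end graphPreimage

/-- Successive square-root preimage graphs for `F(z,w) = (z², w² + az)`, `|a| < 3/16`:
there is a sequence of holomorphic functions `f_n` on the unit disc with `f_0 ≡ 2/3`,
`f_{n+1}(z)² = f_n(z²) − a z`, `f_{n+1}(0) > 0`, `|f_n| ≥ 2/3` on the disc,
`f_n(0) = (2/3)^{1/2^n}` and `f_n(0) → 1`. -/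
theorem stmt7 (a : ℂ) (ha : ‖a‖ < 3 / 16) :
    ∃ f : ℕ → ℂ → ℂ,
      (∀ n, DifferentiableOn ℂ (f n) (Metric.ball (0 : ℂ) 1)) ∧
      (∀ z ∈ Metric.ball (0 : ℂ) 1, f 0 z = 2 / 3) ∧
      (∀ n, ∀ z ∈ Metric.ball (0 : ℂ) 1, f (n + 1) z ^ 2 = f n (z ^ 2) - a * z) ∧
      (∀ n, ∃ r : ℝ, 0 < r ∧ f (n + 1) 0 = (r : ℂ)) ∧
      (∀ n, ∀ z ∈ Metric.ball (0 : ℂ) 1, 2 / 3 ≤ ‖f n z‖) ∧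
      (∀ n, f n 0 = ((((2 : ℝ) / 3) ^ ((1 : ℝ) / 2 ^ n) : ℝ) : ℂ)) ∧
      Tendsto (fun n => f n 0) atTop (𝓝 1) := by
  refine ⟨graphPreimage a, graphPreimage.differentiableOn ha.le, fun _ _ => rfl,
    fun n z _ => graphPreimage.succ_sq a n z,
    fun n => ⟨_, by positivity, graphPreimage.apply_zero a (n + 1)⟩,
    fun n _ hz => graphPreimage.two_thirds_le_norm ha.le n hz, graphPreimage.apply_zero a, ?_⟩
  simp_rw [graphPreimage.apply_zero]
  exact (Complex.continuous_ofReal.tendsto 1).comp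
    (tendsto_rpow_one_div_two_pow_nhds_one (by norm_num))
end

section
/- Let a, b, c ∈ ℂ with |a| ≤ 1/10, |b| ≤ 1/10, |c| ≤ 1/10, and let F(z, w) = (az + z², w² + cw + bz). Then the attracting basin of (0,0) for F is contained in the bidisc {(z, w) ∈ ℂ² : |z| < 2 and |w| < 2}; in particular the basin is a bounded subset of ℂ². -/
open Filter Topology Set Metric

/-!
The complement of the bidisc `{|z| < 2, |w| < 2}`, the ball of radius `2` for the sup norm on
`ℂ²`, is forward invariant: where `|z| ≥ 2` the term `z²` dominates `az`, and where `|z| < 2` but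
`|w| ≥ 2` the term `w²` dominates `cw + bz`. An orbit started outside the bidisc therefore never
enters it, so it cannot converge to `(0,0)`, which lies inside.
-/

def attractingBasin {X : Type*} [TopologicalSpace X] (f : X → X) (x : X) : Set X :=
  {p | Tendsto (fun n => f^[n] p) atTop (𝓝 x)}

theorem attractingBasin_subset_of_mapsTo_compl {X : Type*} [TopologicalSpace X] {f : X → X}
    {x : X} {s : Set X} (hs : s ∈ 𝓝 x) (hf : MapsTo f sᶜ sᶜ) : attractingBasin f x ⊆ s := by
  intro p hp
  by_contra hps
  obtain ⟨n, hn⟩ := (Tendsto.eventually hp hs).exists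
  exact hf.iterate n hps hn

def quadraticSkewProduct (a b c : ℂ) : ℂ × ℂ → ℂ × ℂ :=
  fun q => (a * q.1 + q.1 ^ 2, q.2 ^ 2 + c * q.2 + b * q.1)

section Estimates

variable {𝕜 : Type*} [NormedDivisionRing 𝕜]

theorem two_le_norm_mul_add_sq {a z : 𝕜} (ha : ‖a‖ ≤ 1 / 10) (hz : 2 ≤ ‖z‖) :
    2 ≤ ‖a * z + z ^ 2‖ := by
  have h : ‖z ^ 2‖ - ‖a * z‖ ≤ ‖a * z + z ^ 2‖ := by
    rw [add_comm]; exact norm_sub_le_norm_add _ _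
  rw [norm_pow, norm_mul] at h
  nlinarith [norm_nonneg a]

theorem two_le_norm_sq_add_mul_add_mul {b c z w : 𝕜} (hb : ‖b‖ ≤ 1 / 10) (hc : ‖c‖ ≤ 1 / 10)
    (hz : ‖z‖ ≤ 2) (hw : 2 ≤ ‖w‖) : 2 ≤ ‖w ^ 2 + c * w + b * z‖ := by
  have h : ‖w ^ 2‖ - ‖c * w + b * z‖ ≤ ‖w ^ 2 + c * w + b * z‖ := by
    rw [add_assoc]; exact norm_sub_le_norm_add _ _
  have hlin : ‖c * w + b * z‖ ≤ ‖c‖ * ‖w‖ + ‖b‖ * ‖z‖ := by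
    simpa only [norm_mul] using norm_add_le (c * w) (b * z)
  rw [norm_pow] at h
  nlinarith [norm_nonneg b, norm_nonneg c, norm_nonneg z]

end Estimates

theorem mapsTo_quadraticSkewProduct_compl_ball {a b c : ℂ} (ha : ‖a‖ ≤ 1 / 10)
    (hb : ‖b‖ ≤ 1 / 10) (hc : ‖c‖ ≤ 1 / 10) :
    MapsTo (quadraticSkewProduct a b c) (ball 0 2)ᶜ (ball 0 2)ᶜ := by
  rintro ⟨z, w⟩ hq
  simp only [mem_compl_iff, mem_ball_zero_iff, not_lt, Prod.norm_def, le_max_iff] at hq ⊢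
  by_cases hz : 2 ≤ ‖z‖
  · exact .inl (two_le_norm_mul_add_sq ha hz)
  · exact .inr (two_le_norm_sq_add_mul_add_mul hb hc (not_le.mp hz).le (hq.resolve_left hz))

theorem attractingBasin_quadraticSkewProduct_subset_ball {a b c : ℂ} (ha : ‖a‖ ≤ 1 / 10)
    (hb : ‖b‖ ≤ 1 / 10) (hc : ‖c‖ ≤ 1 / 10) :
    attractingBasin (quadraticSkewProduct a b c) 0 ⊆ ball 0 2 :=
  attractingBasin_subset_of_mapsTo_compl (ball_mem_nhds 0 two_pos)
    (mapsTo_quadraticSkewProduct_compl_ball ha hb hc)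

theorem ball_zero_eq_bidisc (r : ℝ) : ball (0 : ℂ × ℂ) r = {p | ‖p.1‖ < r ∧ ‖p.2‖ < r} := by
  ext p
  simp only [mem_ball_zero_iff, Prod.norm_def, max_lt_iff, mem_ofPred_eq]

/-- For `F(z,w) = (az + z², w² + cw + bz)` with `|a|, |b|, |c| ≤ 1/10`, the attracting
basin of `(0,0)` is contained in the bidisc `{|z| < 2, |w| < 2}`; in particular it is
a bounded subset of `ℂ²`. -/
theorem stmt9 (a b c : ℂ)
    (ha : ‖a‖ ≤ 1 / 10) (hb : ‖b‖ ≤ 1 / 10)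
    (hc : ‖c‖ ≤ 1 / 10) :
    {p : ℂ × ℂ |
        Tendsto (fun n =>
          (fun q : ℂ × ℂ => (a * q.1 + q.1 ^ 2, q.2 ^ 2 + c * q.2 + b * q.1))^[n] p)
          atTop (𝓝 (0, 0))} ⊆
      {p : ℂ × ℂ | ‖p.1‖ < 2 ∧ ‖p.2‖ < 2} ∧
    Bornology.IsBounded
      {p : ℂ × ℂ |
        Tendsto (fun n =>
          (fun q : ℂ × ℂ => (a * q.1 + q.1 ^ 2, q.2 ^ 2 + c * q.2 + b * q.1))^[n] p)
          atTop (𝓝 (0, 0))} := by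
  have hbasin := attractingBasin_quadraticSkewProduct_subset_ball ha hb hc
  exact ⟨ball_zero_eq_bidisc (2 : ℝ) ▸ hbasin, isBounded_ball.subset hbasin⟩
end

section
/- Let a, b, c ∈ ℂ with |a| ≤ 1/10 and |c| + 2|b| < 2/9, let P(z) = az + z², F(z, w) = (az + z², w² + cw + bz), and set Ω_{2/3} = {(z, w) : z ∈ 𝒜_P, |w| < 2/3}, where 𝒜_P = {z : P^{∘n}(z) → 0}. Then F(Ω_{2/3}) ⊆ Ω_{2/3}, and Ω_{2/3} is contained in the attracting basin of (0,0) for F, i.e., F^{∘n}(z, w) → (0,0) for every (z, w) ∈ Ω_{2/3}. -/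
/-!
Since `|a| ≤ 1`, the basin of `P` lies in `|z| < 2`, so on `Ω` the second coordinate of `F`
satisfies `|w'| ≤ (2/3 + |c|) |w| + |b| |z|` with `|w| < 2/3`: this gives invariance, and along
an orbit it is a contraction by `2/3 + |c| < 1` perturbed by `|b| |Pⁿ z| → 0`.
-/

open Filter Topology Set

section Contraction

variable {u ε : ℕ → ℝ} {r : ℝ}

lemma sub_le_pow_mul_sub_of_le_mul_add {η : ℝ} {N : ℕ} (hr0 : 0 ≤ r)
    (hrec : ∀ n ≥ N, u (n + 1) ≤ r * u n + (1 - r) * η) (k : ℕ) :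
    u (N + k) - η ≤ r ^ k * (u N - η) := by
  induction k with
  | zero => simp
  | succ k ih =>
    calc u (N + k + 1) - η ≤ r * (u (N + k) - η) := by linarith [hrec (N + k) (by omega)]
      _ ≤ r * (r ^ k * (u N - η)) := by gcongr
      _ = r ^ (k + 1) * (u N - η) := by ring

lemma tendsto_zero_of_le_mul_add (hr0 : 0 ≤ r) (hr1 : r < 1) (hu : ∀ n, 0 ≤ u n)
    (hrec : ∀ n, u (n + 1) ≤ r * u n + ε n) (hε : Tendsto ε atTop (𝓝 0)) :
    Tendsto u atTop (𝓝 0) := by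
  refine tendsto_order.2 ⟨fun δ hδ => Eventually.of_forall fun n => hδ.trans_le (hu n),
    fun δ hδ => ?_⟩
  -- once `ε n ≤ (1 - r) * (δ / 2)`, the excess `u n - δ / 2` decays geometrically
  obtain ⟨N, hN⟩ := eventually_atTop.1 <|
    hε.eventually (eventually_le_nhds (by positivity : (0 : ℝ) < (1 - r) * (δ / 2)))
  have hpow : Tendsto (fun k => r ^ k * (u N - δ / 2)) atTop (𝓝 0) := by
    simpa using (tendsto_pow_atTop_nhds_zero_of_lt_one hr0 hr1).mul_const (u N - δ / 2)
  obtain ⟨K, hK⟩ := eventually_atTop.1 <| hpow.eventually (eventually_lt_nhds (half_pos hδ))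
  refine eventually_atTop.2 ⟨N + K, fun n hn => ?_⟩
  obtain ⟨k, rfl⟩ := Nat.exists_eq_add_of_le (le_of_add_le_left hn)
  have := sub_le_pow_mul_sub_of_le_mul_add hr0
    (fun n hn => (hrec n).trans (by gcongr; exact hN n hn)) k
  linarith [hK k (by omega)]

end Contraction

def quadMap (a : ℂ) : ℂ → ℂ := fun x => a * x + x ^ 2

def skewMap (a b c : ℂ) : ℂ × ℂ → ℂ × ℂ :=
  fun q => (quadMap a q.1, q.2 ^ 2 + c * q.2 + b * q.1)

/-- `Ω_{2/3} = 𝒜_P × {|w| < 2/3}`. -/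
def basinStrip (a : ℂ) : Set (ℂ × ℂ) :=
  {q | Tendsto (fun n => (quadMap a)^[n] q.1) atTop (𝓝 0) ∧ ‖q.2‖ < 2 / 3}

section Basin

variable {a : ℂ}

lemma norm_le_norm_quadMap (ha : ‖a‖ ≤ 1) {z : ℂ} (hz : 2 ≤ ‖z‖) : ‖z‖ ≤ ‖quadMap a z‖ := by
  have hsum : ‖z‖ - ‖a‖ ≤ ‖a + z‖ := by
    simpa [add_comm] using norm_sub_norm_le z (-a)
  calc ‖z‖ = ‖z‖ * 1 := (mul_one _).symm
    _ ≤ ‖z‖ * ‖a + z‖ := by gcongr; linarith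
    _ = ‖quadMap a z‖ := by rw [quadMap, ← norm_mul]; ring_nf

lemma norm_lt_two_of_tendsto_iterate_quadMap (ha : ‖a‖ ≤ 1) {z : ℂ}
    (hz : Tendsto (fun n => (quadMap a)^[n] z) atTop (𝓝 0)) : ‖z‖ < 2 := by
  by_contra! h
  have hmaps : MapsTo (quadMap a) {w | 2 ≤ ‖w‖} {w | 2 ≤ ‖w‖} := fun w hw =>
    le_trans hw (norm_le_norm_quadMap ha hw)
  have h0 : (0 : ℂ) ∈ {w : ℂ | 2 ≤ ‖w‖} :=
    (isClosed_le continuous_const continuous_norm).mem_of_tendsto hz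
      (Eventually.of_forall fun n => hmaps.iterate n h)
  norm_num at h0

end Basin

section SkewProduct

variable {a b c : ℂ}

lemma fst_iterate_skewMap (n : ℕ) (q : ℂ × ℂ) :
    ((skewMap a b c)^[n] q).1 = (quadMap a)^[n] q.1 :=
  (Function.Semiconj.iterate_right (f := Prod.fst) (fun _ => rfl) n q : _)

lemma norm_snd_skewMap_le {q : ℂ × ℂ} (hq : ‖q.2‖ ≤ 2 / 3) :
    ‖(skewMap a b c q).2‖ ≤ (2 / 3 + ‖c‖) * ‖q.2‖ + ‖b‖ * ‖q.1‖ := by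
  calc ‖q.2 ^ 2 + c * q.2 + b * q.1‖ ≤ ‖q.2 ^ 2‖ + ‖c * q.2‖ + ‖b * q.1‖ := norm_add₃_le
    _ = ‖q.2‖ * ‖q.2‖ + ‖c‖ * ‖q.2‖ + ‖b‖ * ‖q.1‖ := by rw [norm_pow, norm_mul, norm_mul, sq]
    _ ≤ 2 / 3 * ‖q.2‖ + ‖c‖ * ‖q.2‖ + ‖b‖ * ‖q.1‖ := by gcongr
    _ = (2 / 3 + ‖c‖) * ‖q.2‖ + ‖b‖ * ‖q.1‖ := by ring

lemma mapsTo_skewMap_basinStrip (ha : ‖a‖ ≤ 1) (hbc : ‖c‖ + 2 * ‖b‖ < 2 / 9) :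
    MapsTo (skewMap a b c) (basinStrip a) (basinStrip a) := by
  rintro ⟨z, w⟩ ⟨hz, hw⟩
  refine ⟨(tendsto_add_atTop_iff_nat 1).2 hz, ?_⟩
  have hz2 := norm_lt_two_of_tendsto_iterate_quadMap ha hz
  have hbound := norm_snd_skewMap_le (a := a) (b := b) (c := c) (q := (z, w)) hw.le
  dsimp only at hw hz2 hbound ⊢
  nlinarith [norm_nonneg b, norm_nonneg c, norm_nonneg w]

lemma tendsto_iterate_skewMap (ha : ‖a‖ ≤ 1) (hbc : ‖c‖ + 2 * ‖b‖ < 2 / 9) {p : ℂ × ℂ}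
    (hp : p ∈ basinStrip a) : Tendsto (fun n => (skewMap a b c)^[n] p) atTop (𝓝 (0, 0)) := by
  have horbit n : (skewMap a b c)^[n] p ∈ basinStrip a :=
    (mapsTo_skewMap_basinStrip ha hbc).iterate n hp
  have hfst : Tendsto (fun n => ((skewMap a b c)^[n] p).1) atTop (𝓝 0) := by
    simpa only [fst_iterate_skewMap] using hp.1
  have hsnd : Tendsto (fun n => ‖((skewMap a b c)^[n] p).2‖) atTop (𝓝 0) := by
    refine tendsto_zero_of_le_mul_add (r := 2 / 3 + ‖c‖) (by positivity)
      (by linarith [norm_nonneg b]) (fun n => norm_nonneg _) (fun n => ?_)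
      (by simpa using hfst.norm.const_mul ‖b‖)
    rw [Function.iterate_succ_apply']
    exact norm_snd_skewMap_le (horbit n).2.le
  exact hfst.prodMk_nhds (tendsto_zero_iff_norm_tendsto_zero.2 hsnd)

end SkewProduct

/-- For `F(z,w) = (az + z², w² + cw + bz)` with `|a| ≤ 1/10` and `|c| + 2|b| < 2/9`,
the set `Ω_{2/3} = {(z,w) : z ∈ 𝒜_P, |w| < 2/3}` is forward invariant under `F`
and is contained in the attracting basin of `(0,0)`. -/
theorem stmt10 (a b c : ℂ)
    (ha : ‖a‖ ≤ 1 / 10)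
    (hbc : ‖c‖ + 2 * ‖b‖ < 2 / 9) :
    (∀ p ∈ {q : ℂ × ℂ |
        Tendsto (fun n => (fun x : ℂ => a * x + x ^ 2)^[n] q.1) atTop (𝓝 0) ∧
        ‖q.2‖ < 2 / 3},
      (fun q : ℂ × ℂ => (a * q.1 + q.1 ^ 2, q.2 ^ 2 + c * q.2 + b * q.1)) p ∈
        {q : ℂ × ℂ |
          Tendsto (fun n => (fun x : ℂ => a * x + x ^ 2)^[n] q.1) atTop (𝓝 0) ∧
          ‖q.2‖ < 2 / 3}) ∧
    ∀ p ∈ {q : ℂ × ℂ |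
        Tendsto (fun n => (fun x : ℂ => a * x + x ^ 2)^[n] q.1) atTop (𝓝 0) ∧
        ‖q.2‖ < 2 / 3},
      Tendsto (fun n =>
          (fun q : ℂ × ℂ => (a * q.1 + q.1 ^ 2, q.2 ^ 2 + c * q.2 + b * q.1))^[n] p)
        atTop (𝓝 (0, 0)) := by
  have ha' : ‖a‖ ≤ 1 := by linarith
  exact ⟨mapsTo_skewMap_basinStrip ha' hbc, fun _ => tendsto_iterate_skewMap ha' hbc⟩
end
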